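/- arXiv:2301.00517 — 5 statements merged into one kernel-verified Lean document; each statement's English description precedes it below -/
import Mathlib

section
/- Let X and Y be topological spaces with families of supports Φ_X and Φ_Y, and let pr_X : X × Y → X and pr_Y : X × Y → Y be the projections. Then the collection P(Φ_X, Φ_Y) := { Z ⊆ X × Y closed | pr_Y|_Z : Z → Y is a proper map, and for every W ∈ Φ_X one has pr_Y(pr_X^{-1}(W) ∩ Z) ∈ Φ_Y } is a family of supports on X × Y. -/
/-- A family of supports on a topological space `X`: a nonempty collection of closed
subsets that is closed under passing to closed subsets and under binary unions. -/
def IsFamilyOfSupports {X : Type*} [TopologicalSpace X] (Φ : Set (Set X)) : Prop :=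
  Φ.Nonempty ∧ (∀ C ∈ Φ, IsClosed C) ∧
    (∀ C ∈ Φ, ∀ D, D ⊆ C → IsClosed D → D ∈ Φ) ∧
    (∀ C ∈ Φ, ∀ D ∈ Φ, C ∪ D ∈ Φ)

/-- The family of supports `P(Φ_X, Φ_Y)` on `X × Y` used for correspondences:
closed sets `Z` such that `pr_Y|_Z` is proper and
`pr_Y(pr_X⁻¹(W) ∩ Z) ∈ Φ_Y` for all `W ∈ Φ_X`. -/
def corrSupports {X Y : Type*} [TopologicalSpace X] [TopologicalSpace Y]
    (ΦX : Set (Set X)) (ΦY : Set (Set Y)) : Set (Set (X × Y)) :=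
  {Z : Set (X × Y) | IsClosed Z ∧ IsProperMap (Z.restrict (Prod.snd : X × Y → Y)) ∧
    ∀ W ∈ ΦX, (Prod.snd : X × Y → Y) '' ((Prod.fst : X × Y → X) ⁻¹' W ∩ Z) ∈ ΦY}

open Set Filter Topology

/-- If the restriction of `f` to `t` is proper, so is the restriction to any
closed subset `s ⊆ t`. -/
lemma isProperMap_restrict_mono {X Y : Type*} [TopologicalSpace X] [TopologicalSpace Y]
    {f : X → Y} {s t : Set X} (hst : s ⊆ t) (hs : IsClosed s)
    (ht : IsProperMap (t.restrict f)) : IsProperMap (s.restrict f) := by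
  have hj : Topology.IsClosedEmbedding (Set.inclusion hst) := by
    refine ⟨Topology.IsEmbedding.inclusion hst, ?_⟩
    have : Set.range (Set.inclusion hst) = {x : t | (x : X) ∈ s} := by
      ext x
      constructor
      · rintro ⟨z, rfl⟩; exact z.2
      · intro hx; exact ⟨⟨x, hx⟩, rfl⟩
    rw [this]
    exact hs.preimage continuous_subtype_val
  have : s.restrict f = (t.restrict f) ∘ (Set.inclusion hst) := rfl
  rw [this]
  exact ht.comp hj.isProperMap

/-- Key step: properness of a restriction passes to a union of two closed sets. -/
lemma isProperMap_restrict_union {X Y : Type*} [TopologicalSpace X] [TopologicalSpace Y]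
    {f : X → Y} (hf : Continuous f) {s t : Set X}
    (hsp : IsProperMap (s.restrict f)) (htp : IsProperMap (t.restrict f)) :
    IsProperMap ((s ∪ t).restrict f) := by
  rw [isProperMap_iff_ultrafilter]
  refine ⟨hf.comp continuous_subtype_val, fun 𝒰 y hy ↦ ?_⟩
  have key : ∀ (u : Set X) (hu : u ⊆ s ∪ t), IsProperMap (u.restrict f) →
      ({x : ↥(s ∪ t) | (x : X) ∈ u} ∈ 𝒰) → ∃ x, (s ∪ t).restrict f x = y ∧ ↑𝒰 ≤ 𝓝 x := by
    intro u hu hup hmem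
    have hinj : Function.Injective (Set.inclusion hu) := Set.inclusion_injective hu
    have hrange : Set.range (Set.inclusion hu) = {x : ↥(s ∪ t) | (x : X) ∈ u} := by
      ext x
      constructor
      · rintro ⟨z, rfl⟩; exact z.2
      · intro hx; exact ⟨⟨x, hx⟩, rfl⟩
    have hlarge : Set.range (Set.inclusion hu) ∈ 𝒰 := hrange ▸ hmem
    set 𝒲 := 𝒰.comap hinj hlarge with h𝒲
    have hmap : Ultrafilter.map (Set.inclusion hu) 𝒲 = 𝒰 := by
      apply Ultrafilter.coe_injective
      simp only [Ultrafilter.coe_map, h𝒲, Ultrafilter.coe_comap]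
      exact Filter.map_comap_of_mem hlarge
    have hcomp : u.restrict f = ((s ∪ t).restrict f) ∘ (Set.inclusion hu) := rfl
    have htend : Tendsto (u.restrict f) 𝒲 (𝓝 y) := by
      rw [hcomp]
      rw [← hmap] at hy
      exact hy
    obtain ⟨z, hz1, hz2⟩ := hup.ultrafilter_le_nhds_of_tendsto htend
    refine ⟨Set.inclusion hu z, hz1, ?_⟩
    rw [← hmap]
    calc (Ultrafilter.map (Set.inclusion hu) 𝒲 : Filter ↥(s ∪ t))
        ≤ Filter.map (Set.inclusion hu) (𝓝 z) := Filter.map_mono hz2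
      _ ≤ 𝓝 (Set.inclusion hu z) :=
          ((Topology.IsEmbedding.inclusion hu).continuous.tendsto z)
  by_cases hmem : {x : ↥(s ∪ t) | (x : X) ∈ s} ∈ 𝒰
  · exact key s subset_union_left hsp hmem
  · have : {x : ↥(s ∪ t) | (x : X) ∈ s}ᶜ ∈ 𝒰 := Ultrafilter.compl_mem_iff_notMem.2 hmem
    have hmem' : {x : ↥(s ∪ t) | (x : X) ∈ t} ∈ 𝒰 := by
      filter_upwards [this] with x hx
      rcases x.2 with h | h
      · exact absurd h hx
      · exact h
    exact key t subset_union_right htp hmem'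

/-- `P(Φ_X, Φ_Y)` is a family of supports on `X × Y`. -/
theorem corrSupports_isFamilyOfSupports {X Y : Type*} [TopologicalSpace X] [TopologicalSpace Y]
    (ΦX : Set (Set X)) (ΦY : Set (Set Y))
    (hΦX : IsFamilyOfSupports ΦX) (hΦY : IsFamilyOfSupports ΦY) :
    IsFamilyOfSupports (corrSupports ΦX ΦY) := by
  obtain ⟨⟨C₀, hC₀⟩, hYclosed, hYsub, hYunion⟩ := hΦY
  have hempty : (∅ : Set Y) ∈ ΦY := hYsub C₀ hC₀ ∅ (empty_subset _) isClosed_empty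
  refine ⟨⟨∅, ?_⟩, fun C hC ↦ hC.1, ?_, ?_⟩
  · refine ⟨isClosed_empty, ?_, fun W _ ↦ ?_⟩
    · rw [isProperMap_iff_ultrafilter]
      refine ⟨continuous_snd.comp continuous_subtype_val, fun 𝒰 y _ ↦ ?_⟩
      exact absurd (univ_mem (f := (𝒰 : Filter (∅ : Set (X × Y)))))
        fun h ↦ (𝒰.neBot'.ne) (by
          have := 𝒰.nonempty_of_mem h
          rcases this with ⟨⟨x, hx⟩, -⟩
          exact absurd hx (Set.notMem_empty x))
    · simpa using hempty
  · rintro C ⟨hCcl, hCp, hCim⟩ D hDC hDcl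
    refine ⟨hDcl, isProperMap_restrict_mono hDC hDcl hCp, fun W hW ↦ ?_⟩
    have hWcl : IsClosed W := hΦX.2.1 W hW
    have hsub : Prod.snd '' (Prod.fst ⁻¹' W ∩ D) ⊆ Prod.snd '' (Prod.fst ⁻¹' W ∩ C) :=
      Set.image_mono (Set.inter_subset_inter_right _ hDC)
    have hclosed : IsClosed (Prod.snd '' (Prod.fst ⁻¹' W ∩ D)) := by
      have h1 : IsClosed (Prod.fst ⁻¹' W ∩ D) := (hWcl.preimage continuous_fst).inter hDcl
      -- image under snd|_C of the subset
      have h2 : Prod.snd '' (Prod.fst ⁻¹' W ∩ D) =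
          (C.restrict Prod.snd) '' (Subtype.val ⁻¹' (Prod.fst ⁻¹' W ∩ D)) := by
        ext y
        constructor
        · rintro ⟨⟨x, y⟩, ⟨hxW, hxD⟩, rfl⟩
          exact ⟨⟨(x, y), hDC hxD⟩, ⟨hxW, hxD⟩, rfl⟩
        · rintro ⟨⟨⟨x, y⟩, hC⟩, ⟨hxW, hxD⟩, rfl⟩
          exact ⟨(x, y), ⟨hxW, hxD⟩, rfl⟩
      rw [h2]
      exact hCp.isClosedMap _ (h1.preimage continuous_subtype_val)
    exact hYsub _ (hCim W hW) _ hsub hclosed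
  · rintro C ⟨hCcl, hCp, hCim⟩ D ⟨hDcl, hDp, hDim⟩
    refine ⟨hCcl.union hDcl, isProperMap_restrict_union continuous_snd hCp hDp, fun W hW ↦ ?_⟩
    have : Prod.fst ⁻¹' W ∩ (C ∪ D) = (Prod.fst ⁻¹' W ∩ C) ∪ (Prod.fst ⁻¹' W ∩ D) := by
      rw [Set.inter_union_distrib_left]
    rw [this, Set.image_union]
    exact hYunion _ (hCim W hW) _ (hDim W hW)
end

section
/- Let X, Y, Z be topological spaces with families of supports Φ_X, Φ_Y, Φ_Z. Let V ∈ P(Φ_X, Φ_Y) (a family of supports on X × Y) and W ∈ P(Φ_Y, Φ_Z) (a family of supports on Y × Z), and set T := { (x, y, z) ∈ X × Y × Z | (x, y) ∈ V and (y, z) ∈ W }. Then the restriction to T of the projection pr_{X×Z} : X × Y × Z → X × Z is a proper map, and the image pr_{X×Z}(T) belongs to P(Φ_X, Φ_Z). -/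
open Filter Topology


/-- composing correspondence supports. For `V ∈ P(Φ_X, Φ_Y)` and
`W ∈ P(Φ_Y, Φ_Z)`, the projection `pr_{X×Z}` restricted to
`T = {(x,y,z) | (x,y) ∈ V ∧ (y,z) ∈ W}` is proper and `pr_{X×Z}(T) ∈ P(Φ_X, Φ_Z)`. -/
theorem corrSupports_comp {X Y Z : Type*}
    [TopologicalSpace X] [TopologicalSpace Y] [TopologicalSpace Z]
    (ΦX : Set (Set X)) (ΦY : Set (Set Y)) (ΦZ : Set (Set Z))
    (hΦX : IsFamilyOfSupports ΦX) (hΦY : IsFamilyOfSupports ΦY)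
    (hΦZ : IsFamilyOfSupports ΦZ)
    (V : Set (X × Y)) (hV : V ∈ corrSupports ΦX ΦY)
    (W : Set (Y × Z)) (hW : W ∈ corrSupports ΦY ΦZ) :
    IsProperMap (({p : X × Y × Z | (p.1, p.2.1) ∈ V ∧ p.2 ∈ W}).restrict
        (fun p : X × Y × Z => ((p.1, p.2.2) : X × Z))) ∧
      (fun p : X × Y × Z => ((p.1, p.2.2) : X × Z)) ''
          {p : X × Y × Z | (p.1, p.2.1) ∈ V ∧ p.2 ∈ W} ∈ corrSupports ΦX ΦZ := by
  obtain ⟨hVc, hVp, hVsupp⟩ := hV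
  obtain ⟨hWc, hWp, hWsupp⟩ := hW
  set T : Set (X × Y × Z) := {p : X × Y × Z | (p.1, p.2.1) ∈ V ∧ p.2 ∈ W} with hTdef
  have hTc : IsClosed T := by
    have : T = (fun p : X × Y × Z => (p.1, p.2.1)) ⁻¹' V ∩ Prod.snd ⁻¹' W := rfl
    rw [this]
    exact (hVc.preimage (continuous_fst.prodMk (continuous_fst.comp continuous_snd))).inter
      (hWc.preimage continuous_snd)
  -- properness of the projection restricted to T
  have hTproper : IsProperMap (T.restrict (fun p : X × Y × Z => ((p.1, p.2.2) : X × Z))) := by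
    rw [isProperMap_iff_ultrafilter]
    refine ⟨(continuous_fst.prodMk (continuous_snd.comp continuous_snd)).comp
      continuous_subtype_val, ?_⟩
    intro 𝒰 q hq
    have hx : Tendsto (fun t : T => (t : X × Y × Z).1) 𝒰 (𝓝 q.1) :=
      (continuous_fst.tendsto q).comp hq
    have hz : Tendsto (fun t : T => (t : X × Y × Z).2.2) 𝒰 (𝓝 q.2) :=
      (continuous_snd.tendsto q).comp hq
    set φ : T → W := fun t => ⟨(t : X × Y × Z).2, t.2.2⟩ with hφ
    have hφz : Tendsto (W.restrict Prod.snd) (𝒰.map φ) (𝓝 q.2) := by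
      rw [Ultrafilter.coe_map, tendsto_map'_iff]; exact hz
    obtain ⟨w, hw2, hwlim⟩ := (isProperMap_iff_ultrafilter.mp hWp).2 hφz
    have hyz : Tendsto (fun t : T => (t : X × Y × Z).2) 𝒰 (𝓝 w.1) := by
      have := ((continuous_subtype_val.tendsto w).mono_left hwlim)
      rw [Ultrafilter.coe_map, tendsto_map'_iff] at this
      exact this
    have hy : Tendsto (fun t : T => (t : X × Y × Z).2.1) 𝒰 (𝓝 w.1.1) :=
      (continuous_fst.tendsto _).comp hyz
    have hVmem : (q.1, w.1.1) ∈ V := by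
      refine hVc.mem_of_tendsto (hx.prodMk_nhds hy) (Filter.Eventually.of_forall ?_)
      exact fun t => t.2.1
    have hWmem : (w.1.1, q.2) ∈ W := by
      have hwe : w.1 = (w.1.1, q.2) := Prod.ext rfl hw2
      exact hwe ▸ w.2
    refine ⟨⟨(q.1, w.1.1, q.2), hVmem, hWmem⟩, rfl, ?_⟩
    have : Tendsto (fun t : T => (t : X × Y × Z)) 𝒰 (𝓝 (q.1, w.1.1, q.2)) :=
      hx.prodMk_nhds (hy.prodMk_nhds hz)
    have h2 : Tendsto (fun t : T => t) 𝒰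
        (𝓝 (⟨(q.1, w.1.1, q.2), hVmem, hWmem⟩ : T)) := tendsto_subtype_rng.mpr this
    simpa [Filter.Tendsto, Filter.map_id'] using h2
  refine ⟨hTproper, ?_, ?_, ?_⟩
  · have hS : (fun p : X × Y × Z => ((p.1, p.2.2) : X × Z)) '' T =
        Set.range (T.restrict fun p => (p.1, p.2.2)) := (Set.range_restrict _ _).symm
    rw [hS]
    exact hTproper.isClosedMap.isClosed_range
  · -- properness of pr_Z restricted to the image
    set S : Set (X × Z) := (fun p : X × Y × Z => ((p.1, p.2.2) : X × Z)) '' T with hSdef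
    rw [isProperMap_iff_ultrafilter]
    refine ⟨continuous_snd.comp continuous_subtype_val, ?_⟩
    intro 𝒰 z hz
    set g' : T → S := fun t => ⟨((t : X × Y × Z).1, (t : X × Y × Z).2.2), ⟨t.1, t.2, rfl⟩⟩
      with hg'
    haveI : Filter.NeBot (Filter.comap g' ↑𝒰) := by
      refine Filter.comap_neBot ?_
      intro t ht
      obtain ⟨s, hs⟩ := Ultrafilter.nonempty_of_mem ht
      obtain ⟨p, hp, hps⟩ := s.2
      refine ⟨⟨p, hp⟩, ?_⟩
      have : g' ⟨p, hp⟩ = s := Subtype.ext hps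
      rwa [this]
    set 𝒱 : Ultrafilter T := Ultrafilter.of (Filter.comap g' ↑𝒰) with h𝒱
    have hle : ↑𝒱 ≤ Filter.comap g' ↑𝒰 := Ultrafilter.of_le _
    have hmap : 𝒱.map g' = 𝒰 := by
      rw [← Ultrafilter.coe_le_coe, Ultrafilter.coe_map]
      exact le_trans (Filter.map_mono hle) (Filter.map_comap_le)
    have hz' : Tendsto (fun t : T => (t : X × Y × Z).2.2) 𝒱 (𝓝 z) := by
      rw [← hmap, Ultrafilter.coe_map, tendsto_map'_iff] at hz
      exact hz
    -- use properness of W to get the limit y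
    set φ : T → W := fun t => ⟨(t : X × Y × Z).2, t.2.2⟩ with hφ
    have hφz : Tendsto (W.restrict Prod.snd) (𝒱.map φ) (𝓝 z) := by
      rw [Ultrafilter.coe_map, tendsto_map'_iff]; exact hz'
    obtain ⟨w, hw2, hwlim⟩ := (isProperMap_iff_ultrafilter.mp hWp).2 hφz
    have hyz : Tendsto (fun t : T => (t : X × Y × Z).2) 𝒱 (𝓝 w.1) := by
      have := ((continuous_subtype_val.tendsto w).mono_left hwlim)
      rw [Ultrafilter.coe_map, tendsto_map'_iff] at this
      exact this
    have hy : Tendsto (fun t : T => (t : X × Y × Z).2.1) 𝒱 (𝓝 w.1.1) :=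
      (continuous_fst.tendsto _).comp hyz
    -- use properness of V to get the limit x
    set ψ : T → V := fun t => ⟨((t : X × Y × Z).1, (t : X × Y × Z).2.1), t.2.1⟩ with hψ
    have hψy : Tendsto (V.restrict Prod.snd) (𝒱.map ψ) (𝓝 w.1.1) := by
      rw [Ultrafilter.coe_map, tendsto_map'_iff]; exact hy
    obtain ⟨v, hv2, hvlim⟩ := (isProperMap_iff_ultrafilter.mp hVp).2 hψy
    have hxy : Tendsto (fun t : T => ((t : X × Y × Z).1, (t : X × Y × Z).2.1)) 𝒱 (𝓝 v.1) := by
      have := ((continuous_subtype_val.tendsto v).mono_left hvlim)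
      rw [Ultrafilter.coe_map, tendsto_map'_iff] at this
      exact this
    have hx : Tendsto (fun t : T => (t : X × Y × Z).1) 𝒱 (𝓝 v.1.1) :=
      (continuous_fst.tendsto _).comp hxy
    have hVmem : (v.1.1, w.1.1) ∈ V := by
      have hve : v.1 = (v.1.1, w.1.1) := Prod.ext rfl hv2
      exact hve ▸ v.2
    have hWmem : (w.1.1, z) ∈ W := by
      have hwe : w.1 = (w.1.1, z) := Prod.ext rfl hw2
      exact hwe ▸ w.2
    have ht0 : ((v.1.1, w.1.1, z) : X × Y × Z) ∈ T := ⟨hVmem, hWmem⟩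
    refine ⟨⟨(v.1.1, z), ⟨(v.1.1, w.1.1, z), ht0, rfl⟩⟩, rfl, ?_⟩
    rw [← hmap, Ultrafilter.coe_map]
    refine Filter.Tendsto.mono_right ?_ le_rfl
    show Tendsto g' 𝒱 _
    exact tendsto_subtype_rng.mpr (hx.prodMk_nhds hz')
  · -- the supports condition
    intro A hA
    have hB := hWsupp _ (hVsupp A hA)
    have heq : (Prod.snd : X × Z → Z) '' (Prod.fst ⁻¹' A ∩
        ((fun p : X × Y × Z => ((p.1, p.2.2) : X × Z)) '' T)) =
        (Prod.snd : Y × Z → Z) '' (Prod.fst ⁻¹'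
          ((Prod.snd : X × Y → Y) '' ((Prod.fst : X × Y → X) ⁻¹' A ∩ V)) ∩ W) := by
      ext z
      constructor
      · rintro ⟨q, ⟨hxA, p, ⟨hv, hw⟩, rfl⟩, rfl⟩
        exact ⟨(p.2.1, p.2.2), ⟨⟨(p.1, p.2.1), ⟨hxA, hv⟩, rfl⟩, hw⟩, rfl⟩
      · rintro ⟨q, ⟨⟨r, ⟨hxA, hv⟩, hry⟩, hw⟩, rfl⟩
        have hq : ((r.2, q.2) : Y × Z) = q := Prod.ext hry rfl
        refine ⟨(r.1, q.2), ⟨hxA, ⟨(r.1, r.2, q.2), ⟨hv, ?_⟩, rfl⟩⟩, rfl⟩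
        show ((r.2, q.2) : Y × Z) ∈ W
        rw [hq]; exact hw
    rw [heq]
    exact hB
end

section
/- Let X be a topological space with a family of supports Φ, let U ⊆ X be an open subset with inclusion ι : U → X, and let S ⊆ U be a subset that is closed in U. Then S belongs to ι^{-1}(Φ), the smallest family of supports on U containing { C ∩ U | C ∈ Φ }, if and only if the closure of S in X belongs to Φ. -/
/-- The inverse image on the subspace `U ⊆ X` of a family of supports `Φ` on `X`: the
smallest family of supports on `U` (i.e. the intersection of all families of supports on
`U`) containing all the sets `C ∩ U = ι⁻¹(C)` for `C ∈ Φ`, where `ι : U → X` is the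
inclusion. -/
def invImageSupports {X : Type*} [TopologicalSpace X] (U : Set X) (Φ : Set (Set X)) :
    Set (Set ↥U) :=
  ⋂₀ {Ψ : Set (Set ↥U) | IsFamilyOfSupports Ψ ∧
      ∀ C ∈ Φ, ((Subtype.val : ↥U → X) ⁻¹' C) ∈ Ψ}

/-- for an open subset `U ⊆ X` and a subset `S ⊆ U` closed in `U`, one has
`S ∈ ι⁻¹(Φ)` if and only if the closure of `S` in `X` belongs to `Φ`. -/
theorem mem_invImageSupports_iff_closure_mem {X : Type*} [TopologicalSpace X]
    (Φ : Set (Set X)) (hΦ : IsFamilyOfSupports Φ)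
    (U : Set X) (hU : IsOpen U) (S : Set ↥U) (hS : IsClosed S) :
    S ∈ invImageSupports U Φ ↔ closure ((Subtype.val : ↥U → X) '' S) ∈ Φ := by
  obtain ⟨⟨C₀, hC₀⟩, hcl, hsub, hun⟩ := hΦ
  have hempty : (∅ : Set X) ∈ Φ := hsub C₀ hC₀ ∅ (Set.empty_subset _) isClosed_empty
  constructor
  · intro h
    have := h {T : Set ↥U | IsClosed T ∧ closure ((Subtype.val : ↥U → X) '' T) ∈ Φ}
    refine (this ?_).2
    refine ⟨⟨⟨∅, isClosed_empty, by simpa using hempty⟩, fun T hT => hT.1,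
        fun T hT D hDT hD => ⟨hD, ?_⟩, fun T hT D hD => ⟨hT.1.union hD.1, ?_⟩⟩, ?_⟩
    · exact hsub _ hT.2 _ (closure_mono (Set.image_mono hDT)) isClosed_closure
    · rw [Set.image_union, closure_union]
      exact hun _ hT.2 _ hD.2
    · intro C hC
      refine ⟨(hcl C hC).preimage continuous_subtype_val, ?_⟩
      refine hsub C hC _ ?_ isClosed_closure
      rw [Set.image_preimage_eq_inter_range]
      exact (closure_mono Set.inter_subset_left).trans_eq (hcl C hC).closure_eq
  · intro h Ψ hΨ
    obtain ⟨⟨_, _, hsub', _⟩, hpre⟩ := hΨ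
    refine hsub' _ (hpre _ h) S ?_ hS
    intro x hx
    exact subset_closure ⟨x, hx, rfl⟩
end

section
/- Let X be a topological space and R a sheaf of commutative rings on X such that the ring of global sections R(X) is a field. Let M be a sheaf of R-modules and let ι : M → R be a morphism of sheaves of R-modules (with R regarded as a module over itself) which is a monomorphism but not an epimorphism in the category of sheaves of R-modules. Then M has no nonzero global sections: M(X) = 0. -/
open CategoryTheory TopologicalSpace Opposite

set_option synthInstance.maxHeartbeats 1000000 in

/-- let `R` be a sheaf of commutative rings on a topological space `X` whose
ring of global sections is a field, and let `ι : M → R` be a morphism of sheaves of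
`R`-modules which is a monomorphism but not an epimorphism.  Then `M` has no nonzero global
sections. -/
theorem no_nonzero_global_sections_of_mono_not_epi {X : TopCat}
    (R : TopCat.Sheaf CommRingCat X)
    (hfield : IsField (R.val.obj (op ⊤)))
    (M : SheafOfModules
      ((sheafCompose (Opens.grothendieckTopology X)
        (forget₂ CommRingCat RingCat)).obj R))
    (ι : M ⟶ SheafOfModules.unit
      ((sheafCompose (Opens.grothendieckTopology X)
        (forget₂ CommRingCat RingCat)).obj R))
    (hmono : Mono ι) (hepi : ¬ Epi ι) :
    ∀ m : M.val.obj (op ⊤), m = 0 := by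
  intro m
  by_contra hm
  apply hepi
  have hinj : ∀ U, Function.Injective (ι.val.app U) := fun U =>
    PresheafOfModules.injective_of_mono ((SheafOfModules.forget _).map ι) U
  set s := ι.val.app (op ⊤) m with hsdef
  have hs : s ≠ 0 := by
    intro h
    exact hm (hinj (op ⊤) (by rw [map_zero]; exact h))
  obtain ⟨t, ht⟩ := hfield.mul_inv_cancel hs
  apply (SheafOfModules.forget _).epi_of_epi_map
  apply PresheafOfModules.epi_of_surjective
  intro U r
  let R' := (sheafCompose (Opens.grothendieckTopology X)
        (forget₂ CommRingCat RingCat)).obj R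
  let r' : R'.val.obj U := r
  let r'' : (R.val.obj U : Type _) := r
  let s' : (R.val.obj (op ⊤) : Type _) := s
  let g : op (⊤ : Opens X) ⟶ U := (homOfLE (le_top : U.unop ≤ ⊤)).op
  let t' : R'.val.obj U := R'.val.map g t
  refine ⟨(t' * r') • (M.val.map g m), ?_⟩
  erw [map_smul]
  show (t' * r') • (ι.val.app U ((M.val.map g) m)) = r
  rw [PresheafOfModules.naturality_apply, ← hsdef]
  show (R.val.map g t * r'') * (R.val.map g s') = r''
  rw [mul_comm, ← mul_assoc, ← map_mul, ht, map_one, one_mul]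
end

section
/- Let A be a commutative ring, let x_1, …, x_c ∈ A be a regular sequence on A, and let B be a commutative A-algebra such that the images of x_1, …, x_c in B form a regular sequence on B. Then for every i ≥ 1 the Tor module Tor_i^A(A/(x_1, …, x_c), B) vanishes, and the natural map (A/(x_1, …, x_c)) ⊗_A B → B/(x_1, …, x_c)B is an isomorphism. -/
open scoped TensorProduct

open CategoryTheory

universe u

open CategoryTheory.Limits CategoryTheory.MonoidalCategory HomologicalComplex

section Helpers

theorem my_homologyMap_smul {C : Type*} [Category C] [Abelian C] {R : Type*} [CommRing R]
    [CategoryTheory.Linear R C]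
    {K L : HomologicalComplex C (ComplexShape.down ℕ)} (f : K ⟶ L) (x : R) (n : ℕ) :
    homologyMap (x • f) n = x • homologyMap f n := by
  dsimp only [homologyMap]
  rw [show (shortComplexFunctor C _ n).map (x • f) = x • (shortComplexFunctor C _ n).map f by
    ext <;> simp [shortComplexFunctor] <;> rfl]
  exact ShortComplex.homologyMap_smul _ _

theorem my_les_van {C : Type*} [Category C] [Abelian C]
    (S : ShortComplex (HomologicalComplex C (ComplexShape.down ℕ)))
    (hS : S.ShortExact)
    (hK1 : ∀ n, 1 ≤ n → IsZero (S.X₁.homology n))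
    (hK2 : ∀ n, 1 ≤ n → IsZero (S.X₂.homology n))
    (h0 : Mono (homologyMap S.f 0)) :
    ∀ n, 1 ≤ n → IsZero (S.X₃.homology n) := by
  intro n hn
  obtain ⟨m, rfl⟩ : ∃ m, n = m + 1 := ⟨n - 1, by omega⟩
  have hrel : (ComplexShape.down ℕ).Rel (m+1) m := by simp
  have hδmono : Mono (hS.δ (m+1) m hrel) :=
    (hS.homology_exact₃ (m+1) m hrel).mono_g (IsZero.eq_of_src (hK2 (m+1) (by omega)) _ _)
  have hδ0 : hS.δ (m+1) m hrel = 0 := by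
    cases m with
    | zero => exact zero_of_comp_mono _ (hS.δ_comp (0+1) 0 hrel)
    | succ k => exact (hK1 (k+1) (by omega)).eq_of_tgt _ _
  refine (IsZero.iff_id_eq_zero _).mpr ?_
  rw [← cancel_mono (hS.δ (m+1) m hrel)]
  simp [hδ0]

theorem isSMulRegular_of_equiv {A : Type*} [CommRing A] {M N : Type*} [AddCommGroup M]
    [AddCommGroup N] [Module A M] [Module A N]
    (e : M ≃ₗ[A] N) (x : A) (h : IsSMulRegular M x) : IsSMulRegular N x := by
  intro a b hab
  simp only at hab
  have : e.symm (x • a) = e.symm (x • b) := by rw [hab]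
  simp only [map_smul] at this
  exact e.symm.injective.eq_iff.mp (h this)

theorem my_prefix {R M : Type*} [CommRing R] [AddCommGroup M] [Module R M]
    (zs : List R) (x : R)
    (h : RingTheory.Sequence.IsWeaklyRegular M (zs ++ [x])) :
    RingTheory.Sequence.IsWeaklyRegular M zs ∧
      IsSMulRegular (M ⧸ (Ideal.ofList zs • ⊤ : Submodule R M)) x := by
  constructor
  · refine ⟨fun i hi => ?_⟩
    have := h.regular_mod_prev i (by simp only [List.length_append, List.length_singleton]; omega)
    rwa [List.take_append_of_le_length (le_of_lt hi), List.getElem_append_left hi] at this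
  · have := h.regular_mod_prev zs.length
      (by simp only [List.length_append, List.length_singleton]; omega)
    have hx : (zs ++ [x])[zs.length]'(by simp) = x := List.getElem_concat_length rfl _
    rwa [List.take_left, hx] at this

theorem exact_quot_mod {A : Type u} [CommRing A] (J J' : Ideal A) (x : A)
    (hJ' : J' = J ⊔ Ideal.span {x}) (hle : J ≤ J') :
    Function.Exact (x • (LinearMap.id : A ⧸ J →ₗ[A] A ⧸ J))
      (Submodule.mapQ J J' LinearMap.id hle) := by
  intro y
  obtain ⟨a, rfl⟩ := Submodule.Quotient.mk_surjective J y
  constructor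
  · intro h0
    have haJ' : a ∈ J' := by
      rwa [Submodule.mapQ_apply, LinearMap.id_coe, id_eq, Submodule.Quotient.mk_eq_zero] at h0
    rw [hJ'] at haJ'
    obtain ⟨j, hj, s, hs, rfl⟩ := Submodule.mem_sup.mp haJ'
    obtain ⟨c, rfl⟩ := Ideal.mem_span_singleton'.mp hs
    refine ⟨Submodule.Quotient.mk c, ?_⟩
    simp only [LinearMap.smul_apply, LinearMap.id_coe, id_eq]
    rw [← Submodule.Quotient.mk_smul, Submodule.Quotient.eq]
    have : x • c - (j + c * x) = -j := by rw [smul_eq_mul]; ring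
    exact this ▸ neg_mem hj
  · rintro ⟨z, hz⟩
    rw [← hz]
    obtain ⟨c, rfl⟩ := Submodule.Quotient.mk_surjective J z
    simp only [LinearMap.smul_apply, LinearMap.id_coe, id_eq, ← Submodule.Quotient.mk_smul,
      Submodule.mapQ_apply, Submodule.Quotient.mk_eq_zero]
    rw [hJ']
    exact Submodule.mem_sup_right (Ideal.mem_span_singleton'.mpr ⟨c, by rw [smul_eq_mul]; ring⟩)

end Helpers

section ModCat

variable {A B : Type u} [CommRing A] [CommRing B] [Algebra A B]

instance tenPFC (M : ModuleCat.{u} A) :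
    PreservesFiniteColimits ((tensoringLeft (ModuleCat.{u} A)).obj M) :=
  inferInstanceAs (PreservesFiniteColimits (tensorLeft M))

/-- the tensored complex -/
noncomputable abbrev cplx (P : ProjectiveResolution (ModuleCat.of A B)) (M : ModuleCat.{u} A) :
    HomologicalComplex (ModuleCat.{u} A) (ComplexShape.down ℕ) :=
  (((tensoringLeft (ModuleCat.{u} A)).obj M).mapHomologicalComplex _).obj P.complex

noncomputable def h0iso (P : ProjectiveResolution (ModuleCat.of A B)) (M : ModuleCat.{u} A) :
    (cplx P M).homology 0 ≅ ModuleCat.of A (M ⊗[A] B) :=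
  (ChainComplex.isoHomologyι₀ _) ≪≫
    asIso (P.fromLeftDerivedZero' ((tensoringLeft (ModuleCat.{u} A)).obj M))

theorem pflat (P : ProjectiveResolution (ModuleCat.of A B)) (n : ℕ) :
    Module.Flat A (P.complex.X n) := by
  have : Projective (P.complex.X n) := P.projective n
  have : Module.Projective A (P.complex.X n) :=
    (IsProjective.iff_projective _).mpr
      (by rwa [show ModuleCat.of A (P.complex.X n) = P.complex.X n from rfl])
  infer_instance

theorem flat_vanish (P : ProjectiveResolution (ModuleCat.of A B)) (M : ModuleCat.{u} A)
    [Module.Flat A M] (n : ℕ) : IsZero ((cplx P M).homology (n+1)) := by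
  rw [← HomologicalComplex.exactAt_iff_isZero_homology]
  have hP := P.complex_exactAt_succ n
  rw [HomologicalComplex.exactAt_iff' _ (n+2) (n+1) n (by simp) (by simp)] at hP ⊢
  rw [ShortComplex.moduleCat_exact_iff_range_eq_ker] at hP
  have hfe : Function.Exact (P.complex.d (n+2) (n+1)) (P.complex.d (n+1) n) :=
    LinearMap.exact_iff.mpr hP.symm
  have h2 := Module.Flat.lTensor_exact M hfe
  rw [ShortComplex.moduleCat_exact_iff_range_eq_ker]
  exact (LinearMap.exact_iff.mp h2).symm

/-- B-side regularity -/
theorem regB (J : Ideal A) (x : A)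
    (h : IsSMulRegular (B ⧸ ((J.map (algebraMap A B)) • ⊤ : Submodule B B)) (algebraMap A B x)) :
    IsSMulRegular (B ⧸ (J • ⊤ : Submodule A B)) x := by
  have e2 : (B ⧸ ((J.map (algebraMap A B)) • ⊤ : Submodule B B)) ≃ₗ[B]
      B ⧸ (J.map (algebraMap A B)) :=
    Submodule.quotEquivOfEq _ _ (by rw [smul_eq_mul, Ideal.mul_top])
  have hreg1 : IsSMulRegular (B ⧸ (J.map (algebraMap A B) : Ideal B)) (algebraMap A B x) :=
    isSMulRegular_of_equiv e2 _ h
  have hreg2 : IsSMulRegular (B ⧸ (J.map (algebraMap A B) : Ideal B)) x := by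
    intro a b hab
    refine hreg1 ?_
    simp only at hab ⊢
    rwa [algebraMap_smul, algebraMap_smul]
  have e1 : (B ⧸ (J.map (algebraMap A B) : Ideal B)) ≃ₗ[A] (B ⧸ (J • ⊤ : Submodule A B)) :=
    ((Submodule.Quotient.restrictScalarsEquiv A
      (J.map (algebraMap A B) : Submodule B B)).symm.trans
      (Submodule.quotEquivOfEq _ _ (Ideal.smul_top_eq_map J).symm))
  exact isSMulRegular_of_equiv e1 x hreg2

/-- A-side regularity -/
theorem regA (J : Ideal A) (x : A)
    (h : IsSMulRegular (A ⧸ (J • ⊤ : Submodule A A)) x) : IsSMulRegular (A ⧸ J) x :=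
  isSMulRegular_of_equiv
    (Submodule.quotEquivOfEq _ _ (by rw [smul_eq_mul, Ideal.mul_top])) x h

end ModCat

section Key

variable {A B : Type u} [CommRing A] [CommRing B] [Algebra A B]

open RingTheory.Sequence

theorem rTensor_smul_id {M Z : Type u} [AddCommGroup M] [Module A M] [AddCommGroup Z]
    [Module A Z] (x : A) :
    LinearMap.rTensor Z (x • (LinearMap.id : M →ₗ[A] M)) = x • LinearMap.id := by
  apply TensorProduct.ext'
  intro a b
  simp [TensorProduct.smul_tmul']

theorem key_vanish (P : ProjectiveResolution (ModuleCat.of A B)) :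
    ∀ (ys : List A), IsWeaklyRegular A ys → IsWeaklyRegular B (ys.map (algebraMap A B)) →
    ∀ n, 1 ≤ n → IsZero ((cplx P (ModuleCat.of A (A ⧸ Ideal.ofList ys))).homology n) := by
  intro ys
  induction ys using List.reverseRecOn with
  | nil =>
    intro _ _ n hn
    obtain ⟨m, rfl⟩ : ∃ m, n = m + 1 := ⟨n - 1, by omega⟩
    have : Module.Flat A (A ⧸ (Ideal.ofList ([] : List A))) := by
      rw [Ideal.ofList_nil]
      exact Module.Flat.of_linearEquiv (Submodule.quotEquivOfEqBot ⊥ rfl)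
    haveI : Module.Flat A ↥(ModuleCat.of A (A ⧸ Ideal.ofList ([] : List A))) := this
    exact flat_vanish P _ m
  | append_singleton zs x ih =>
    intro hA hB n hn
    obtain ⟨hAzs, hAx⟩ := my_prefix zs x hA
    rw [List.map_append, List.map_singleton] at hB
    obtain ⟨hBzs, hBx⟩ := my_prefix (zs.map (algebraMap A B)) (algebraMap A B x) hB
    set J := Ideal.ofList zs with hJ
    set J' := Ideal.ofList (zs ++ [x]) with hJ'def
    have hJ'eq : J' = J ⊔ Ideal.span {x} := by
      rw [hJ'def, Ideal.ofList_append, Ideal.ofList_singleton]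
    have hle : J ≤ J' := hJ'eq ▸ le_sup_left
    set QJ : ModuleCat.{u} A := ModuleCat.of A (A ⧸ J) with hQJ
    set QJ' : ModuleCat.{u} A := ModuleCat.of A (A ⧸ J') with hQJ'
    set π : QJ ⟶ QJ' := ModuleCat.ofHom (Submodule.mapQ J J' LinearMap.id hle) with hπ
    have hexact_mod := exact_quot_mod J J' x hJ'eq hle
    have hinj_mod : Function.Injective (x • (LinearMap.id : A ⧸ J →ₗ[A] A ⧸ J)) := by
      intro a b hab
      exact regA J x hAx (by simpa using hab)
    have hsurj_mod : Function.Surjective (Submodule.mapQ J J' LinearMap.id hle) := by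
      intro y
      obtain ⟨a, rfl⟩ := Submodule.Quotient.mk_surjective J' y
      exact ⟨Submodule.Quotient.mk a, by simp only [Submodule.mapQ_apply, LinearMap.id_coe, id_eq]⟩
    set f1 : cplx P QJ ⟶ cplx P QJ := x • 𝟙 _ with hf1def
    set g1 : cplx P QJ ⟶ cplx P QJ' :=
      (NatTrans.mapHomologicalComplex ((tensoringLeft (ModuleCat.{u} A)).map π) _).app P.complex
      with hg1def
    have hf1 : ∀ m : ℕ, f1.f m =
        (ModuleCat.ofHom (LinearMap.rTensor (P.complex.X m) (x • (LinearMap.id : A ⧸ J →ₗ[A] A ⧸ J))) :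
          (cplx P QJ).X m ⟶ (cplx P QJ).X m) := by
      intro m
      rw [rTensor_smul_id]
      rfl
    have hg1 : ∀ m : ℕ, g1.f m =
        (ModuleCat.ofHom (LinearMap.rTensor (P.complex.X m) (Submodule.mapQ J J' LinearMap.id hle)) :
          (cplx P QJ).X m ⟶ (cplx P QJ').X m) := by
      intro m
      rfl
    have hzero : f1 ≫ g1 = 0 := by
      ext m : 1
      rw [HomologicalComplex.comp_f, hf1 m, hg1 m]
      show ModuleCat.ofHom ((LinearMap.rTensor (P.complex.X m) (Submodule.mapQ J J' LinearMap.id hle)).comp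
        (LinearMap.rTensor (P.complex.X m) (x • (LinearMap.id : A ⧸ J →ₗ[A] A ⧸ J)))) = 0
      rw [← LinearMap.rTensor_comp]
      have : (Submodule.mapQ J J' LinearMap.id hle).comp
          (x • (LinearMap.id : A ⧸ J →ₗ[A] A ⧸ J)) = 0 := by
        apply LinearMap.ext
        intro t
        simp only [LinearMap.comp_apply, LinearMap.zero_apply]
        exact hexact_mod.apply_apply_eq_zero t
      rw [this, LinearMap.rTensor_zero, ModuleCat.ofHom_zero]
    set S : ShortComplex (HomologicalComplex (ModuleCat.{u} A) (ComplexShape.down ℕ)) :=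
      ShortComplex.mk f1 g1 hzero with hSdef
    have hS : S.ShortExact := by
      apply HomologicalComplex.shortExact_of_degreewise_shortExact
      intro m
      haveI := pflat P m
      refine { exact := ?_, mono_f := ?_, epi_g := ?_ }
      · rw [ShortComplex.moduleCat_exact_iff_range_eq_ker]
        have hEx := rTensor_exact (P.complex.X m) hexact_mod hsurj_mod
        rw [LinearMap.exact_iff] at hEx
        show LinearMap.range (f1.f m).hom = LinearMap.ker (g1.f m).hom
        rw [hf1 m, hg1 m]
        exact hEx.symm
      · rw [ModuleCat.mono_iff_injective]
        show Function.Injective (f1.f m)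
        rw [hf1 m]
        exact Module.Flat.rTensor_preserves_injective_linearMap _ hinj_mod
      · rw [ModuleCat.epi_iff_surjective]
        show Function.Surjective (g1.f m)
        rw [hg1 m]
        exact LinearMap.rTensor_surjective _ hsurj_mod
    have hH0reg : IsSMulRegular ((cplx P QJ).homology 0) x := by
      have hmap : (Ideal.ofList (zs.map (algebraMap A B))) = J.map (algebraMap A B) := by
        rw [hJ, Ideal.map_ofList]
      rw [hmap] at hBx
      have hq := regB (B := B) J x hBx
      exact isSMulRegular_of_equiv
        (((h0iso P QJ).toLinearEquiv.trans (TensorProduct.quotTensorEquivQuotSMul B J)).symm) x hq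
    have hmono : Mono (HomologicalComplex.homologyMap S.f 0) := by
      have heq : HomologicalComplex.homologyMap S.f 0 = x • 𝟙 ((cplx P QJ).homology 0) := by
        show homologyMap (x • 𝟙 (cplx P QJ)) 0 = _
        rw [my_homologyMap_smul, HomologicalComplex.homologyMap_id]
      rw [heq, ModuleCat.mono_iff_injective]
      intro a b hab
      exact hH0reg hab
    exact my_les_van S hS (ih hAzs hBzs) (ih hAzs hBzs) hmono n hn

end Key


/-- if `x₁, …, x_c` is a regular sequence on `A` whose image in the
`A`-algebra `B` is a regular sequence on `B`, then `Tor_i^A(A/(x₁, …, x_c), B) = 0` for all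
`i ≥ 1`, and the natural map `(A/(x₁, …, x_c)) ⊗[A] B → B/(x₁, …, x_c)B` is an
isomorphism. -/
theorem tor_vanishing_of_regular_sequence {A B : Type u} [CommRing A] [CommRing B]
    [Algebra A B] (xs : List A)
    (hA : RingTheory.Sequence.IsRegular A xs)
    (hB : RingTheory.Sequence.IsRegular B (xs.map (algebraMap A B)))
    (I : Ideal A) (hI : I = Ideal.span {a : A | a ∈ xs}) :
    (∀ i : ℕ, 1 ≤ i →
      Subsingleton
        (((Tor (ModuleCat.{u} A) i).obj (ModuleCat.of A (A ⧸ I))).obj (ModuleCat.of A B))) ∧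
      ∃ e : ((A ⧸ I) ⊗[A] B) ≃ₗ[A] (B ⧸ (I.map (algebraMap A B))),
        ∀ (a : A) (b : B),
          e ((Ideal.Quotient.mk I a) ⊗ₜ[A] b) =
            Ideal.Quotient.mk (I.map (algebraMap A B)) (algebraMap A B a * b) := by
  constructor
  · intro i hi
    obtain ⟨P⟩ : Nonempty (ProjectiveResolution (ModuleCat.of A B)) := HasProjectiveResolution.out
    have hIxs : I = Ideal.ofList xs := hI
    subst hIxs
    have hvan := key_vanish P xs hA.toIsWeaklyRegular hB.toIsWeaklyRegular i hi
    have hiso := P.isoLeftDerivedObj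
      ((tensoringLeft (ModuleCat.{u} A)).obj (ModuleCat.of A (A ⧸ Ideal.ofList xs))) i
    have hzero : Limits.IsZero
        (((Tor (ModuleCat.{u} A) i).obj (ModuleCat.of A (A ⧸ Ideal.ofList xs))).obj
          (ModuleCat.of A B)) :=
      hvan.of_iso hiso
    have e : (((Tor (ModuleCat.{u} A) i).obj (ModuleCat.of A (A ⧸ Ideal.ofList xs))).obj
        (ModuleCat.of A B)) ≅ ModuleCat.of A PUnit :=
      hzero.iso (ModuleCat.isZero_of_subsingleton _)
    exact e.toLinearEquiv.toEquiv.subsingleton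
  · refine ⟨(TensorProduct.quotTensorEquivQuotSMul B I).trans
      ((Submodule.quotEquivOfEq _ _ (Ideal.smul_top_eq_map I)).trans
        (Submodule.Quotient.restrictScalarsEquiv A
          (I.map (algebraMap A B) : Submodule B B))), ?_⟩
    intro a b
    simp only [LinearEquiv.trans_apply, TensorProduct.quotTensorEquivQuotSMul_mk_tmul,
      Submodule.quotEquivOfEq_mk, Submodule.Quotient.restrictScalarsEquiv_mk]
    rw [Ideal.Quotient.mk_eq_mk, Algebra.smul_def]
end
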